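/- Let N be a positive integer and w ∈ C̄ a word with π(w) = [[a,b],[c,d]]. (i) If d is a unit of ℤ/Nℤ, then there exists a unique α ∈ ℤ/Nℤ such that αw ∈ Ā, and there exists a unique β ∈ ℤ/Nℤ such that wβ ∈ Ā. (ii) If d is not a unit of ℤ/Nℤ, then for all α, β ∈ ℤ/Nℤ, both αw and wβ lie in C̄. -/

import Mathlib

/-- The monoid homomorphism π sending a word α₁…α_l over ℤ/Nℤ to the matrix product
[[0,1],[−1,α₁]] ⋯ [[0,1],[−1,α_l]]. -/
def piWordN (N : ℕ) (w : List (ZMod N)) : Matrix (Fin 2) (Fin 2) (ZMod N) :=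
  (w.map fun α => !![0, 1; -1, α]).prod

/-- Ā : the words whose image under π has (2,2)-entry equal to 0. -/
def Abar (N : ℕ) : Set (List (ZMod N)) :=
  {w | piWordN N w 1 1 = 0}

/-! With `π(w) = [[a,b],[c,d]]`, prepending `α` makes the (2,2)-entry `α d - b` and appending `β`
makes it `c + d β`. A root of either expression makes `d` divide `b` or `c`, hence divide
`ad - bc = 1`; so there is none unless `d` is a unit, and then the root is unique. -/

theorem IsUnit.existsUnique_mul_right_eq {M : Type*} [Monoid M] {d : M} (hd : IsUnit d) (b : M) :
    ∃! x, x * d = b := by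
  obtain ⟨u, rfl⟩ := hd
  exact ⟨b * ↑u⁻¹, by simp, fun x hx => by simp [← hx]⟩

theorem IsUnit.existsUnique_mul_left_eq {M : Type*} [Monoid M] {d : M} (hd : IsUnit d) (b : M) :
    ∃! x, d * x = b := by
  obtain ⟨u, rfl⟩ := hd
  exact ⟨↑u⁻¹ * b, by simp, fun x hx => by simp [← hx]⟩

theorem isUnit_of_dvd_mul_of_mul_sub_mul_eq_one {R : Type*} [CommRing R] {a b c d : R}
    (hdet : a * d - b * c = 1) (hd : d ∣ b * c) : IsUnit d :=
  isUnit_of_dvd_one (hdet ▸ dvd_sub (dvd_mul_left d a) hd)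

section piWordN

variable {N : ℕ}

theorem piWordN_cons (α : ZMod N) (w : List (ZMod N)) :
    piWordN N (α :: w) = !![0, 1; -1, α] * piWordN N w := by
  simp [piWordN]

theorem piWordN_append_singleton (w : List (ZMod N)) (β : ZMod N) :
    piWordN N (w ++ [β]) = piWordN N w * !![0, 1; -1, β] := by
  simp [piWordN]

theorem det_piWordN (w : List (ZMod N)) : (piWordN N w).det = 1 := by
  induction w with
  | nil => simp [piWordN]
  | cons α w ih =>
    rw [piWordN_cons, Matrix.det_mul, ih, Matrix.det_fin_two_of]
    ring

variable {w : List (ZMod N)} {a b c d : ZMod N}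

theorem cons_mem_Abar_iff (hπ : piWordN N w = !![a, b; c, d]) (α : ZMod N) :
    α :: w ∈ Abar N ↔ α * d = b := by
  simp [Abar, piWordN_cons, hπ, Matrix.mul_apply, Fin.sum_univ_two, neg_add_eq_zero, eq_comm]

theorem append_singleton_mem_Abar_iff (hπ : piWordN N w = !![a, b; c, d]) (β : ZMod N) :
    w ++ [β] ∈ Abar N ↔ d * β = -c := by
  simp [Abar, piWordN_append_singleton, hπ, Matrix.mul_apply, Fin.sum_univ_two,
    add_eq_zero_iff_neg_eq, eq_comm]

end piWordN

theorem stmt11_general (N : ℕ) (w : List (ZMod N))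
    (a b c d : ZMod N) (hπ : piWordN N w = !![a, b; c, d]) :
    (IsUnit d → (∃! α : ZMod N, α :: w ∈ Abar N) ∧ (∃! β : ZMod N, w ++ [β] ∈ Abar N)) ∧
    (¬ IsUnit d → ∀ α β : ZMod N, α :: w ∉ Abar N ∧ w ++ [β] ∉ Abar N) := by
  have hdet : a * d - b * c = 1 := by
    simpa [hπ, Matrix.det_fin_two_of] using det_piWordN w
  simp only [cons_mem_Abar_iff hπ, append_singleton_mem_Abar_iff hπ]
  refine ⟨fun hd => ⟨hd.existsUnique_mul_right_eq b, hd.existsUnique_mul_left_eq (-c)⟩,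
    fun hd α β => ⟨fun hα => hd ?_, fun hβ => hd ?_⟩⟩
  · exact isUnit_of_dvd_mul_of_mul_sub_mul_eq_one hdet
      (dvd_mul_of_dvd_left (Dvd.intro_left α hα) c)
  · exact isUnit_of_dvd_mul_of_mul_sub_mul_eq_one hdet
      (dvd_mul_of_dvd_right (dvd_neg.mp (Dvd.intro β hβ)) b)

theorem stmt11 (N : ℕ) (hN : 0 < N) (w : List (ZMod N)) (hw : w ∉ Abar N)
    (a b c d : ZMod N) (hπ : piWordN N w = !![a, b; c, d]) :
    (IsUnit d → (∃! α : ZMod N, α :: w ∈ Abar N) ∧ (∃! β : ZMod N, w ++ [β] ∈ Abar N)) ∧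
    (¬ IsUnit d → ∀ α β : ZMod N, α :: w ∉ Abar N ∧ w ++ [β] ∉ Abar N) :=
  stmt11_general N w a b c d hπ
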